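/- arXiv:2605.11775 — 2 statements merged into one kernel-verified Lean document; each statement's English description precedes it below -/
import Mathlib

section
/- For any probability distribution p with full support on a finite set V, the quantity t2(p) = ∑_{v∈V} p_v²(H(p) + log p_v) is nonnegative, with equality if and only if p is uniform. -/
/-!
Since `∑ p = 1`, `t2 p = ∑ p v ^ 2 log p v - (∑ p v ^ 2)(∑ p v log p v)` is the covariance of
`p` and `log p` under the distribution `p`. Symmetrising this covariance over pairs gives
`2 t2 p = ∑_{v,w} p v p w (p v - p w)(log p v - log p w)`, a sum of nonnegative terms because
`log` is increasing; it vanishes exactly when all `p v` coincide.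
-/

noncomputable def entropy {V : Type*} [Fintype V] (p : V → ℝ) : ℝ :=
  -∑ v, p v * Real.log (p v)

noncomputable def t2 {V : Type*} [Fintype V] (p : V → ℝ) : ℝ :=
  ∑ v, (p v) ^ 2 * (entropy p + Real.log (p v))

open Finset Real

theorem Finset.sum_sum_mul_mul_sub_mul_sub {ι R : Type*} [CommRing R] (s : Finset ι)
    (w f g : ι → R) :
    ∑ i ∈ s, ∑ j ∈ s, w i * w j * ((f i - f j) * (g i - g j)) =
      2 * ((∑ i ∈ s, w i) * ∑ i ∈ s, w i * f i * g i -
        (∑ i ∈ s, w i * f i) * ∑ i ∈ s, w i * g i) := by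
  have expand : ∀ i j, w i * w j * ((f i - f j) * (g i - g j)) =
      w i * f i * g i * w j + w i * (w j * f j * g j)
        - w i * f i * (w j * g j) - w i * g i * (w j * f j) := fun i j => by ring
  simp only [expand, sum_add_distrib, sum_sub_distrib, ← sum_mul_sum]
  ring

namespace Real

theorem sub_mul_log_sub_log_nonneg {a b : ℝ} (ha : 0 < a) (hb : 0 < b) :
    0 ≤ (a - b) * (log a - log b) := by
  rcases le_total a b with h | h
  · exact mul_nonneg_of_nonpos_of_nonpos (sub_nonpos.2 h) (sub_nonpos.2 (log_le_log ha h))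
  · exact mul_nonneg (sub_nonneg.2 h) (sub_nonneg.2 (log_le_log hb h))

theorem sub_mul_log_sub_log_eq_zero_iff {a b : ℝ} (ha : 0 < a) (hb : 0 < b) :
    (a - b) * (log a - log b) = 0 ↔ a = b := by
  rw [mul_eq_zero, sub_eq_zero, sub_eq_zero, log_injOn_pos.eq_iff ha hb, or_self]

end Real

section t2

variable {V : Type*} {p : V → ℝ}

theorem two_mul_t2_eq [Fintype V] (hs : ∑ v, p v = 1) :
    2 * t2 p = ∑ v, ∑ w, p v * p w * ((p v - p w) * (log (p v) - log (p w))) := by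
  rw [sum_sum_mul_mul_sub_mul_sub, hs, t2, entropy]
  simp only [mul_add, sum_add_distrib, ← sum_mul]
  ring_nf

theorem t2_summand_nonneg (hp : ∀ v, 0 < p v) (v w : V) :
    0 ≤ p v * p w * ((p v - p w) * (log (p v) - log (p w))) :=
  mul_nonneg (mul_pos (hp v) (hp w)).le (sub_mul_log_sub_log_nonneg (hp v) (hp w))

theorem t2_nonneg [Fintype V] (hp : ∀ v, 0 < p v) (hs : ∑ v, p v = 1) : 0 ≤ t2 p := by
  refine (mul_nonneg_iff_of_pos_left two_pos).1 ?_
  rw [two_mul_t2_eq hs]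
  exact sum_nonneg fun v _ => sum_nonneg fun w _ => t2_summand_nonneg hp v w

theorem t2_eq_zero_iff [Fintype V] (hp : ∀ v, 0 < p v) (hs : ∑ v, p v = 1) :
    t2 p = 0 ↔ ∀ v w, p v = p w := by
  have hsum := fun v => sum_eq_zero_iff_of_nonneg fun w (_ : w ∈ univ) => t2_summand_nonneg hp v w
  rw [← mul_eq_zero_iff_left two_ne_zero, two_mul_t2_eq hs,
    sum_eq_zero_iff_of_nonneg fun v _ => sum_nonneg fun w _ => t2_summand_nonneg hp v w]
  simp only [mem_univ, true_implies, hsum, mul_eq_zero_iff_left (mul_pos (hp _) (hp _)).ne',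
    sub_mul_log_sub_log_eq_zero_iff (hp _) (hp _)]

end t2

theorem forall_eq_iff_forall_eq_one_div_card {V : Type*} [Fintype V] {p : V → ℝ} (hs : ∑ v, p v = 1) :
    (∀ v w, p v = p w) ↔ ∀ v, p v = 1 / Fintype.card V := by
  refine ⟨fun h v => eq_one_div_of_mul_eq_one_right ?_, fun h v w => by rw [h v, h w]⟩
  rw [← hs, ← nsmul_eq_mul, ← card_univ, ← sum_const]
  exact sum_congr rfl fun w _ => (h w v).symm

theorem stmt4_general {V : Type*} [Fintype V] (p : V → ℝ)
    (hp : ∀ v, 0 < p v) (hs : ∑ v, p v = 1) :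
    0 ≤ t2 p ∧ (t2 p = 0 ↔ ∀ v, p v = 1 / Fintype.card V) :=
  ⟨t2_nonneg hp hs, (t2_eq_zero_iff hp hs).trans (forall_eq_iff_forall_eq_one_div_card hs)⟩

theorem stmt4 {V : Type*} [Fintype V] [Nonempty V] (p : V → ℝ)
    (hp : ∀ v, 0 < p v) (hs : ∑ v, p v = 1) :
    0 ≤ t2 p ∧ (t2 p = 0 ↔ ∀ v, p v = 1 / Fintype.card V) :=
  stmt4_general p hp hs
end

section
/- Let p be a softmax distribution with logits z on a finite set V, fix y ∈ V, A ∈ ℝ, and η > 0, and define updated logits z'_v = z_v + ηA(𝟙[v=y] − p_v). Then the directional derivative of entropy along this update direction, i.e., d/dη H(softmax(z + η·δ))|_{η=0} with δ_v = A(𝟙[v=y] − p_v), equals A·(−t1(p,y) + t2(p)), where t1(p,y) = p_y(H(p) + log p_y) and t2(p) = ∑_v p_v²(H(p) + log p_v). -/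
noncomputable def softmax {V : Type*} [Fintype V] [DecidableEq V] (z : V → ℝ) (v : V) : ℝ :=
  Real.exp (z v) / ∑ u, Real.exp (z u)

noncomputable def t1 {V : Type*} [Fintype V] (p : V → ℝ) (y : V) : ℝ :=
  p y * (entropy p + Real.log (p y))

/-! Along a logit direction `δ`, softmax moves by `ṗ_v = p_v (δ_v - ∑_u p_u δ_u)`.
Since `∑_v ṗ_v = 0`, the entropy moves by
`-∑_v ṗ_v log p_v = -∑_v p_v δ_v (H(p) + log p_v)`, and for `δ_v = A (𝟙[v = y] - p_v)`
this sum splits into the `t1` and `t2` terms. -/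

open Real Finset

theorem entropy_eq_sum_negMulLog {V : Type*} [Fintype V] (p : V → ℝ) :
    entropy p = ∑ v, negMulLog (p v) := by
  simp only [entropy, negMulLog, neg_mul, sum_neg_distrib]

theorem hasDerivAt_entropy {V : Type*} [Fintype V] {p : V → ℝ → ℝ} {p' : V → ℝ}
    {x : ℝ} (hp : ∀ v, HasDerivAt (p v) (p' v) x) (hp0 : ∀ v, p v x ≠ 0) :
    HasDerivAt (fun η => entropy (fun v => p v η)) (-∑ v, p' v * (log (p v x) + 1)) x := by
  simp only [entropy_eq_sum_negMulLog]
  refine (HasDerivAt.fun_sum fun v _ =>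
    (hasDerivAt_negMulLog (hp0 v)).comp x (hp v)).congr_deriv ?_
  rw [← sum_neg_distrib]
  exact sum_congr rfl fun v _ => by ring

section Softmax

variable {V : Type*} [Fintype V] [DecidableEq V]

theorem softmax_pos (z : V → ℝ) (v : V) : 0 < softmax z v :=
  div_pos (exp_pos _) (sum_pos (fun u _ => exp_pos (z u)) ⟨v, mem_univ v⟩)

theorem sum_softmax [Nonempty V] (z : V → ℝ) : ∑ v, softmax z v = 1 := by
  simp only [softmax, ← sum_div]
  exact div_self (sum_pos (fun u _ => exp_pos (z u)) univ_nonempty).ne'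

theorem hasDerivAt_softmax_line (z δ : V → ℝ) (v : V) :
    HasDerivAt (fun η : ℝ => softmax (fun u => z u + η * δ u) v)
      (softmax z v * (δ v - ∑ u, softmax z u * δ u)) 0 := by
  have hexp : ∀ u, HasDerivAt (fun η : ℝ => exp (z u + η * δ u)) (exp (z u) * δ u) 0 := by
    intro u
    simpa using (((hasDerivAt_id (0 : ℝ)).mul_const (δ u)).const_add (z u)).exp
  have hS : (∑ u, exp (z u)) ≠ 0 := (sum_pos (fun u _ => exp_pos (z u)) ⟨v, mem_univ v⟩).ne'
  refine ((hexp v).fun_div (HasDerivAt.fun_sum fun u _ => hexp u)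
    (by simpa using hS)).congr_deriv ?_
  simp only [softmax, zero_mul, add_zero, div_mul_eq_mul_div, ← sum_div]
  field_simp

theorem hasDerivAt_entropy_softmax_line [Nonempty V] (z δ : V → ℝ) :
    HasDerivAt (fun η : ℝ => entropy (softmax fun u => z u + η * δ u))
      (-∑ v, softmax z v * δ v * (entropy (softmax z) + log (softmax z v))) 0 := by
  have h := hasDerivAt_entropy (fun v => hasDerivAt_softmax_line z δ v)
    (fun v => (softmax_pos _ v).ne')
  simp only [zero_mul, add_zero] at h
  refine h.congr_deriv ?_
  set p := softmax z
  set m := ∑ u, p u * δ u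
  set H := entropy p
  have hp1 : ∑ v, p v = 1 := sum_softmax z
  have hm : ∑ u, p u * δ u = m := rfl
  have hH : ∑ v, p v * log (p v) = -H := (neg_neg _).symm
  have hterm : ∀ v, p v * (δ v - m) * (log (p v) + 1) = p v * δ v * (H + log (p v))
      + (p v * δ v - m * p v) - H * (p v * δ v) - m * (p v * log (p v)) := fun v => by ring
  simp only [hterm, sum_add_distrib, sum_sub_distrib, ← mul_sum, hp1, hm, hH]
  ring

theorem sum_mul_one_hot_sub_mul (p : V → ℝ) (y : V) (A : ℝ) :
    ∑ v, p v * (A * ((if v = y then (1:ℝ) else 0) - p v)) * (entropy p + log (p v))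
      = A * (t1 p y - t2 p) := by
  have hterm : ∀ v, p v * (A * ((if v = y then (1:ℝ) else 0) - p v)) * (entropy p + log (p v))
      = A * (if v = y then p v * (entropy p + log (p v)) else 0)
        - A * (p v ^ 2 * (entropy p + log (p v))) := fun v => by split_ifs <;> ring
  simp only [hterm, sum_sub_distrib, ← mul_sum, sum_ite_eq', mem_univ, if_true, t1, t2]
  ring

end Softmax

theorem stmt8 {V : Type*} [Fintype V] [DecidableEq V] [Nonempty V] (z : V → ℝ) (y : V) (A : ℝ) :
    HasDerivAt
      (fun η : ℝ => entropy (softmax (fun v =>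
        z v + η * (A * ((if v = y then (1:ℝ) else 0) - softmax z v)))))
      (A * (-(t1 (softmax z) y) + t2 (softmax z))) 0 := by
  refine (hasDerivAt_entropy_softmax_line z _).congr_deriv ?_
  rw [sum_mul_one_hot_sub_mul]
  ring
end
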